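/- arXiv:2311.07927 — 5 statements merged into one kernel-verified Lean document; each statement's English description precedes it below -/
import Mathlib

section
/- If F satisfies assumption (A), then for every λ ∈ ℝ, Colev_{<^l}(F, λq) = [Ψ_F ≤ λ]. -/
open Pointwise

/-- The Gerstewitz scalarization function `ψ^q_P(y) = sup {t : ℝ | y ∈ t • q + P}`. -/
noncomputable def psi {Y : Type*} [AddCommGroup Y] [Module ℝ Y] (P : Set Y) (q : Y) (y : Y) : ℝ :=
  sSup {t : ℝ | y - t • q ∈ P}

/-- The scalarization of the set-valued map `F`: `Ψ_F(x) = inf_{z ∈ F(x)} ψ^q_P(z)`. -/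
noncomputable def PsiF {X Y : Type*} [AddCommGroup Y] [Module ℝ Y]
    (P : Set Y) (q : Y) (F : X → Set Y) (x : X) : EReal :=
  ⨅ z ∈ F x, ((psi P q z : ℝ) : EReal)

/-- The colevel set of `F` at height `λ • q`. -/
def Colev {X Y : Type*} [AddCommGroup Y] [Module ℝ Y] [TopologicalSpace Y]
    (P : Set Y) (q : Y) (F : X → Set Y) (lam : ℝ) : Set X :=
  {x | ¬ F x ⊆ {y : Y | y - lam • q ∈ interior P}}

/-- Assumption (A): `ψ^q_P` attains its infimum on `F(x)` for all `x`. -/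
def AssumptionA {X Y : Type*} [AddCommGroup Y] [Module ℝ Y]
    (P : Set Y) (q : Y) (F : X → Set Y) : Prop :=
  ∀ x : X, ∃ z ∈ F x, ∀ w ∈ F x, psi P q z ≤ psi P q w

/-! Because `q ∈ int P` is an order unit of the cone, `T(y) = {t | y - t q ∈ P}` is nonempty, and
because `P` is closed and `-q ∉ P` it is bounded above. For `t < s ∈ T(y)`,
`y - t q = (y - s q) + (s - t) q ∈ P + int P ⊆ int P`. Hence `t < ψ(y) ↔ y - t q ∈ int P`, so
`x ∈ Colev(F, λq)` iff `ψ(z) ≤ λ` for some `z ∈ F(x)`, which under (A) is `Ψ_F(x) ≤ λ`. -/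

open Set Filter Topology

theorem biInf_le_iff_of_isMinOn {α ι : Type*} [CompleteLattice α] {f : ι → α} {s : Set ι}
    {z : ι} (hz : z ∈ s) (hmin : IsMinOn f s z) {a : α} :
    ⨅ w ∈ s, f w ≤ a ↔ ∃ w ∈ s, f w ≤ a := by
  refine ⟨fun h => ⟨z, hz, le_trans (le_iInf₂ fun w (hw : w ∈ s) => hmin hw) h⟩, ?_⟩
  rintro ⟨w, hw, hwa⟩
  exact (biInf_le f hw).trans hwa

theorem exists_pos_add_smul_mem_of_mem_nhds {Y : Type*} [AddCommMonoid Y] [Module ℝ Y]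
    [TopologicalSpace Y] [ContinuousAdd Y] [ContinuousSMul ℝ Y]
    {a : Y} {U : Set Y} (hU : U ∈ 𝓝 a) (y : Y) : ∃ ε : ℝ, 0 < ε ∧ a + ε • y ∈ U := by
  have hlim : Tendsto (fun ε : ℝ => a + ε • y) (𝓝 0) (𝓝 a) :=
    (continuous_const.add (continuous_id.smul continuous_const)).tendsto' 0 a (by simp)
  have hev : ∀ᶠ ε in 𝓝[>] (0 : ℝ), a + ε • y ∈ U :=
    (hlim.eventually hU).filter_mono nhdsWithin_le_nhds
  obtain ⟨ε, hεU, hε⟩ := (hev.and self_mem_nhdsWithin).exists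
  exact ⟨ε, hε, hεU⟩

section Cone

variable {Y : Type*} [AddCommGroup Y] [Module ℝ Y] [TopologicalSpace Y] {P : Set Y} {q : Y}

theorem smul_mem_interior_of_cone [ContinuousConstSMul ℝ Y]
    (hPcone : ∀ c : ℝ, 0 < c → ∀ y ∈ P, c • y ∈ P) {c : ℝ} (hc : 0 < c) {y : Y}
    (hy : y ∈ interior P) : c • y ∈ interior P := by
  have hsub : c • P ⊆ P := by
    rintro _ ⟨z, hz, rfl⟩
    exact hPcone c hc z hz
  apply interior_mono hsub
  rw [interior_smul₀ hc.ne']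
  exact smul_mem_smul_set hy

variable [IsTopologicalAddGroup Y] [ContinuousSMul ℝ Y]

theorem add_mem_interior_of_cone (hPconv : Convex ℝ P)
    (hPcone : ∀ c : ℝ, 0 < c → ∀ y ∈ P, c • y ∈ P) {a b : Y} (ha : a ∈ P)
    (hb : b ∈ interior P) : a + b ∈ interior P := by
  have hmid : (1 / 2 : ℝ) • a + (1 / 2 : ℝ) • b ∈ interior P :=
    hPconv.combo_self_interior_mem_interior ha hb (by norm_num) (by norm_num) (by norm_num)
  convert smul_mem_interior_of_cone hPcone two_pos hmid using 1
  rw [smul_add, smul_smul, smul_smul]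
  norm_num

theorem sub_smul_mem_interior_of_lt (hPconv : Convex ℝ P)
    (hPcone : ∀ c : ℝ, 0 < c → ∀ y ∈ P, c • y ∈ P) (hq : q ∈ interior P) {y : Y} {s t : ℝ}
    (hy : y - t • q ∈ P) (hst : s < t) : y - s • q ∈ interior P := by
  convert add_mem_interior_of_cone hPconv hPcone hy
    (smul_mem_interior_of_cone hPcone (sub_pos.2 hst) hq) using 1
  rw [sub_smul]
  abel

/-- An interior point of a cone is an order unit. -/
theorem exists_pos_add_smul_mem_of_mem_interior
    (hPcone : ∀ c : ℝ, 0 < c → ∀ y ∈ P, c • y ∈ P) (hq : q ∈ interior P) (y : Y) :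
    ∃ c : ℝ, 0 < c ∧ y + c • q ∈ P := by
  obtain ⟨ε, hε, hεP⟩ := exists_pos_add_smul_mem_of_mem_nhds (mem_interior_iff_mem_nhds.1 hq) y
  refine ⟨ε⁻¹, inv_pos.2 hε, ?_⟩
  convert hPcone ε⁻¹ (inv_pos.2 hε) _ hεP using 1
  rw [smul_add, smul_smul, inv_mul_cancel₀ hε.ne', one_smul, add_comm]

theorem neg_notMem_of_mem_interior (hPconv : Convex ℝ P)
    (hPcone : ∀ c : ℝ, 0 < c → ∀ y ∈ P, c • y ∈ P) (hPuniv : P ≠ univ)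
    (hq : q ∈ interior P) : -q ∉ P := by
  intro hneg
  have h0 : (0 : Y) ∈ interior P := by
    simpa using add_mem_interior_of_cone hPconv hPcone hneg hq
  refine hPuniv (eq_univ_of_forall fun y => ?_)
  obtain ⟨ε, hε, hεy⟩ := exists_pos_add_smul_mem_of_mem_nhds (mem_interior_iff_mem_nhds.1 h0) y
  rw [zero_add] at hεy
  simpa [smul_smul, inv_mul_cancel₀ hε.ne'] using hPcone ε⁻¹ (inv_pos.2 hε) _ hεy

theorem nonempty_setOf_sub_smul_mem (hPcone : ∀ c : ℝ, 0 < c → ∀ y ∈ P, c • y ∈ P)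
    (hq : q ∈ interior P) (y : Y) : {t : ℝ | y - t • q ∈ P}.Nonempty := by
  obtain ⟨c, -, hc⟩ := exists_pos_add_smul_mem_of_mem_interior hPcone hq y
  exact ⟨-c, by simpa using hc⟩

theorem bddAbove_setOf_sub_smul_mem (hPclosed : IsClosed P) (hPconv : Convex ℝ P)
    (hPcone : ∀ c : ℝ, 0 < c → ∀ y ∈ P, c • y ∈ P) (hPuniv : P ≠ univ)
    (hq : q ∈ interior P) (y : Y) : BddAbove {t : ℝ | y - t • q ∈ P} := by
  have hneg : Pᶜ ∈ 𝓝 (-q) :=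
    hPclosed.isOpen_compl.mem_nhds (neg_notMem_of_mem_interior hPconv hPcone hPuniv hq)
  obtain ⟨ε, hε, hεy⟩ := exists_pos_add_smul_mem_of_mem_nhds hneg y
  refine ⟨ε⁻¹, fun t ht => le_of_not_gt fun hlt => hεy ?_⟩
  have hmem := interior_subset (sub_smul_mem_interior_of_lt hPconv hPcone hq ht hlt)
  convert hPcone ε hε _ hmem using 1
  rw [smul_sub, smul_smul, mul_inv_cancel₀ hε.ne', one_smul, neg_add_eq_sub]

theorem lt_psi_iff (hPclosed : IsClosed P) (hPconv : Convex ℝ P)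
    (hPcone : ∀ c : ℝ, 0 < c → ∀ y ∈ P, c • y ∈ P) (hPuniv : P ≠ univ)
    (hq : q ∈ interior P) (y : Y) (t : ℝ) : t < psi P q y ↔ y - t • q ∈ interior P := by
  constructor
  · intro ht
    obtain ⟨s, hs, hts⟩ := exists_lt_of_lt_csSup (nonempty_setOf_sub_smul_mem hPcone hq y) ht
    exact sub_smul_mem_interior_of_lt hPconv hPcone hq hs hts
  · intro ht
    obtain ⟨ε, hε, hεP⟩ :=
      exists_pos_add_smul_mem_of_mem_nhds (mem_interior_iff_mem_nhds.1 ht) (-q)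
    have hmem : t + ε ∈ {s : ℝ | y - s • q ∈ P} := by
      show y - (t + ε) • q ∈ P
      convert hεP using 1
      rw [add_smul, smul_neg]
      abel
    exact (lt_add_of_pos_right t hε).trans_le
      (le_csSup (bddAbove_setOf_sub_smul_mem hPclosed hPconv hPcone hPuniv hq y) hmem)

theorem mem_colev_iff {X : Type*} (hPclosed : IsClosed P) (hPconv : Convex ℝ P)
    (hPcone : ∀ c : ℝ, 0 < c → ∀ y ∈ P, c • y ∈ P) (hPuniv : P ≠ univ)
    (hq : q ∈ interior P) {F : X → Set Y} {x : X} {lam : ℝ} :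
    x ∈ Colev P q F lam ↔ ∃ z ∈ F x, psi P q z ≤ lam := by
  simp only [Colev, mem_ofPred_eq, not_subset, ← not_lt,
    lt_psi_iff hPclosed hPconv hPcone hPuniv hq]

end Cone

theorem psiF_le_coe_iff {X Y : Type*} [AddCommGroup Y] [Module ℝ Y] {P : Set Y} {q : Y}
    {F : X → Set Y} (hA : AssumptionA P q F) (x : X) (lam : ℝ) :
    PsiF P q F x ≤ lam ↔ ∃ z ∈ F x, psi P q z ≤ lam := by
  obtain ⟨z, hz, hmin⟩ := hA x
  have hmin' : IsMinOn (fun w => (psi P q w : EReal)) (F x) z := fun w hw =>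
    EReal.coe_le_coe_iff.2 (hmin w hw)
  rw [PsiF, biInf_le_iff_of_isMinOn hz hmin']
  simp only [EReal.coe_le_coe_iff]

theorem stmt4_general {X Y : Type*}
    [AddCommGroup Y] [Module ℝ Y] [TopologicalSpace Y]
    [IsTopologicalAddGroup Y] [ContinuousSMul ℝ Y]
    (P : Set Y) (hPclosed : IsClosed P) (hPconv : Convex ℝ P)
    (hPcone : ∀ c : ℝ, 0 < c → ∀ y ∈ P, c • y ∈ P)
    (hPuniv : P ≠ Set.univ)
    (q : Y) (hq : q ∈ interior P)
    (F : X → Set Y)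
    (hA : AssumptionA P q F) (lam : ℝ) :
    Colev P q F lam = {x : X | PsiF P q F x ≤ (lam : EReal)} := by
  ext x
  exact (mem_colev_iff hPclosed hPconv hPcone hPuniv hq).trans (psiF_le_coe_iff hA x lam).symm

/-- If `F` satisfies assumption (A), then for every `λ ∈ ℝ`,
`Colev_{<ˡ}(F, λq) = [Ψ_F ≤ λ]`. -/
theorem stmt4 {X Y : Type*} [TopologicalSpace X] [T2Space X]
    [AddCommGroup Y] [Module ℝ Y] [TopologicalSpace Y]
    [IsTopologicalAddGroup Y] [ContinuousSMul ℝ Y] [T2Space Y]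
    (P : Set Y) (hPclosed : IsClosed P) (hPconv : Convex ℝ P)
    (hP0 : (0 : Y) ∈ P) (hPcone : ∀ c : ℝ, 0 < c → ∀ y ∈ P, c • y ∈ P)
    (hPne : P ≠ {0}) (hPuniv : P ≠ Set.univ)
    (q : Y) (hq : q ∈ interior P)
    (F : X → Set Y) (hF : ∀ x, (F x).Nonempty)
    (hA : AssumptionA P q F) (lam : ℝ) :
    Colev P q F lam = {x : X | PsiF P q F x ≤ (lam : EReal)} :=
  stmt4_general P hPclosed hPconv hPcone hPuniv q hq F hA lam
end

section
/- Suppose F is P-bounded-valued, i.e., every value F(x) is a P-bounded set. If Colev_{<^l}(F, λq) = [Ψ_F ≤ λ] for every λ ∈ ℝ, then F satisfies assumption (A). -/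
/-!
`Ψ_F(x)` is a real number `λ`: `F(x)` is nonempty, and `P`-boundedness against the
neighbourhood `int P - q` of `0` bounds `ψ` below on `F(x)`. Then `x ∈ [Ψ_F ≤ λ] = Colev(F, λq)`,
so some `z ∈ F(x)` has `z - λq ∉ int P`. Since `t < ψ(y)` forces `y - tq ∈ int P` (the supremum
defining `ψ(y)` is attained, `P` being closed and `-q ∉ P`), we get `ψ(z) ≤ λ`, so `z` is a
minimiser.
-/

open Pointwise

def PBounded {Y : Type*} [AddCommGroup Y] [Module ℝ Y] [TopologicalSpace Y]
    (P : Set Y) (A : Set Y) : Prop :=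
  ∀ U ∈ nhds (0 : Y), ∃ r : ℝ, 0 < r ∧ A ⊆ r • U + P

open Filter Set Topology

lemma Convex.add_mem_of_smul_mem {Y : Type*} [AddCommGroup Y] [Module ℝ Y] {P : Set Y}
    (hPconv : Convex ℝ P) (hPcone : ∀ c : ℝ, 0 < c → ∀ y ∈ P, c • y ∈ P)
    {a b : Y} (ha : a ∈ P) (hb : b ∈ P) : a + b ∈ P := by
  have hmid := hPcone 2 two_pos _ (hPconv ha hb (by norm_num : (0 : ℝ) ≤ 1 / 2)
    (by norm_num : (0 : ℝ) ≤ 1 / 2) (by norm_num))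
  rwa [smul_add, smul_smul, smul_smul, show (2 : ℝ) * (1 / 2) = 1 by norm_num, one_smul,
    one_smul] at hmid

namespace ConvexCone

variable {Y : Type*} [AddCommGroup Y] [Module ℝ Y] [TopologicalSpace Y] (C : ConvexCone ℝ Y)

lemma smul_mem_interior [ContinuousConstSMul ℝ Y] {c : ℝ} (hc : 0 < c) {v : Y}
    (hv : v ∈ interior (C : Set Y)) : c • v ∈ interior (C : Set Y) := by
  refine interior_mono ?_ (interior_smul₀ hc.ne' (C : Set Y) ▸ smul_mem_smul_set hv)
  rintro _ ⟨w, hw, rfl⟩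
  exact C.smul_mem hc hw

lemma add_mem_interior [IsTopologicalAddGroup Y] {p v : Y} (hp : p ∈ C)
    (hv : v ∈ interior (C : Set Y)) : p + v ∈ interior (C : Set Y) :=
  interior_mono (add_subset_iff.mpr fun _ ha _ hb => C.add_mem ha hb)
    (subset_interior_add_right (add_mem_add hp hv))

variable [IsTopologicalAddGroup Y] [ContinuousSMul ℝ Y]

lemma exists_pos_add_smul_mem {q : Y} (hq : q ∈ interior (C : Set Y)) (y : Y) :
    ∃ s : ℝ, 0 < s ∧ y + s • q ∈ C := by
  have hlim : Tendsto (fun ε : ℝ => ε • y + q) (𝓝[>] 0) (𝓝 q) := by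
    have : Continuous fun ε : ℝ => ε • y + q := by fun_prop
    simpa using (this.tendsto 0).mono_left nhdsWithin_le_nhds
  obtain ⟨ε, hεC, hε⟩ :=
    ((hlim.eventually (isOpen_interior.mem_nhds hq)).and self_mem_nhdsWithin).exists
  refine ⟨ε⁻¹, inv_pos.mpr hε, ?_⟩
  have := C.smul_mem (inv_pos.mpr hε) (interior_subset hεC)
  rwa [smul_add, smul_smul, inv_mul_cancel₀ (ne_of_gt hε), one_smul] at this

lemma neg_notMem_of_mem_interior (hC : (C : Set Y) ≠ univ) {q : Y}
    (hq : q ∈ interior (C : Set Y)) : -q ∉ C := by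
  intro hnq
  have h0 : (0 : Y) ∈ interior (C : Set Y) := by simpa using C.add_mem_interior hnq hq
  refine hC (eq_univ_of_forall fun z => ?_)
  obtain ⟨s, -, hs⟩ := C.exists_pos_add_smul_mem h0 z
  simpa using hs

end ConvexCone

lemma EReal.exists_biInf_coe_eq {ι : Type*} {A : Set ι} {f : ι → ℝ} (hA : A.Nonempty)
    (hf : BddBelow (f '' A)) : ∃ m : ℝ, ⨅ i ∈ A, (f i : EReal) = m := by
  obtain ⟨i, hi⟩ := hA
  obtain ⟨b, hb⟩ := hf
  have hlow : (b : EReal) ≤ ⨅ i ∈ A, (f i : EReal) :=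
    le_iInf₂ fun j hj => EReal.coe_le_coe_iff.mpr (hb (mem_image_of_mem f hj))
  have hup : ⨅ i ∈ A, (f i : EReal) ≤ f i := iInf₂_le i hi
  exact ⟨_, (EReal.coe_toReal (hup.trans_lt (EReal.coe_lt_top _)).ne
    ((EReal.bot_lt_coe b).trans_le hlow).ne').symm⟩

section Scalarization

variable {Y : Type*} [AddCommGroup Y] [Module ℝ Y] [TopologicalSpace Y]
  [IsTopologicalAddGroup Y] [ContinuousSMul ℝ Y] {C : ConvexCone ℝ Y} {q : Y}

lemma nonempty_sub_smul_mem (hq : q ∈ interior (C : Set Y)) (y : Y) :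
    {t : ℝ | y - t • q ∈ C}.Nonempty := by
  obtain ⟨s, -, hs⟩ := C.exists_pos_add_smul_mem hq y
  exact ⟨-s, by simpa [sub_eq_add_neg] using hs⟩

lemma bddAbove_sub_smul_mem (hCclosed : IsClosed (C : Set Y)) (hCuniv : (C : Set Y) ≠ univ)
    (hq : q ∈ interior (C : Set Y)) (y : Y) : BddAbove {t : ℝ | y - t • q ∈ C} := by
  -- `y - t • q ∈ C` with `t > 0` means `t⁻¹ • y - q ∈ C`, which fails near `-q ∉ C`.
  have hopen : IsOpen {s : ℝ | s • y - q ∉ (C : Set Y)} :=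
    hCclosed.isOpen_compl.preimage (by fun_prop)
  obtain ⟨δ, hδ, hball⟩ :=
    Metric.isOpen_iff.mp hopen 0 (by simpa using C.neg_notMem_of_mem_interior hCuniv hq)
  refine ⟨δ⁻¹, fun t ht => le_of_not_gt fun hlt => ?_⟩
  have htpos : 0 < t := (inv_pos.mpr hδ).trans hlt
  apply hball (show t⁻¹ ∈ Metric.ball 0 δ from ?_)
  · have := C.smul_mem (inv_pos.mpr htpos) ht
    rwa [smul_sub, smul_smul, inv_mul_cancel₀ htpos.ne', one_smul] at this
  · rw [Metric.mem_ball, Real.dist_0_eq_abs, abs_of_pos (inv_pos.mpr htpos)]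
    exact inv_lt_of_inv_lt₀ hδ hlt

lemma le_psi (hCclosed : IsClosed (C : Set Y)) (hCuniv : (C : Set Y) ≠ univ)
    (hq : q ∈ interior (C : Set Y)) {y : Y} {t : ℝ} (h : y - t • q ∈ C) : t ≤ psi C q y :=
  le_csSup (bddAbove_sub_smul_mem hCclosed hCuniv hq y) h

lemma sub_psi_smul_mem (hCclosed : IsClosed (C : Set Y)) (hCuniv : (C : Set Y) ≠ univ)
    (hq : q ∈ interior (C : Set Y)) (y : Y) : y - psi C q y • q ∈ C :=
  (hCclosed.preimage (by fun_prop : Continuous fun t : ℝ => y - t • q)).csSup_mem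
    (nonempty_sub_smul_mem hq y) (bddAbove_sub_smul_mem hCclosed hCuniv hq y)

lemma sub_smul_mem_interior_of_lt_psi (hCclosed : IsClosed (C : Set Y))
    (hCuniv : (C : Set Y) ≠ univ) (hq : q ∈ interior (C : Set Y)) {y : Y} {t : ℝ}
    (h : t < psi C q y) : y - t • q ∈ interior (C : Set Y) := by
  have := C.add_mem_interior (sub_psi_smul_mem hCclosed hCuniv hq y)
    (C.smul_mem_interior (sub_pos.mpr h) hq)
  convert this using 1
  rw [sub_smul]
  abel

lemma PBounded.bddBelow_psi (hCclosed : IsClosed (C : Set Y))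
    (hCuniv : (C : Set Y) ≠ univ) (hq : q ∈ interior (C : Set Y)) {A : Set Y}
    (hA : PBounded C A) : BddBelow (psi C q '' A) := by
  obtain ⟨r, hr, hAr⟩ := hA {v | q + v ∈ interior (C : Set Y)}
    ((isOpen_interior.preimage (continuous_const_add q)).mem_nhds (by simpa using hq))
  refine ⟨-r, forall_mem_image.mpr fun z hz => le_psi hCclosed hCuniv hq ?_⟩
  obtain ⟨_, ⟨v, hv, rfl⟩, p, hp, rfl⟩ := hAr hz
  rw [show r • v + p - (-r) • q = r • (q + v) + p by
    rw [neg_smul, sub_neg_eq_add, smul_add]; abel]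
  exact C.add_mem (C.smul_mem hr (interior_subset hv)) hp

lemma exists_psi_le_of_mem_colev (hCclosed : IsClosed (C : Set Y))
    (hCuniv : (C : Set Y) ≠ univ) (hq : q ∈ interior (C : Set Y)) {X : Type*} {F : X → Set Y}
    {x : X} {lam : ℝ} (hx : x ∈ Colev C q F lam) : ∃ z ∈ F x, psi C q z ≤ lam := by
  obtain ⟨z, hz, hzint⟩ := not_subset.mp hx
  exact ⟨z, hz, le_of_not_gt fun h =>
    hzint (sub_smul_mem_interior_of_lt_psi hCclosed hCuniv hq h)⟩

end Scalarization

theorem stmt5_general {X Y : Type*}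
    [AddCommGroup Y] [Module ℝ Y] [TopologicalSpace Y]
    [IsTopologicalAddGroup Y] [ContinuousSMul ℝ Y]
    (P : Set Y) (hPclosed : IsClosed P) (hPconv : Convex ℝ P)
    (hPcone : ∀ c : ℝ, 0 < c → ∀ y ∈ P, c • y ∈ P)
    (hPuniv : P ≠ Set.univ)
    (q : Y) (hq : q ∈ interior P)
    (F : X → Set Y) (hF : ∀ x, (F x).Nonempty)
    (hbdd : ∀ x, PBounded P (F x))
    (hlev : ∀ lam : ℝ, Colev P q F lam = {x : X | PsiF P q F x ≤ (lam : EReal)}) :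
    AssumptionA P q F := by
  obtain ⟨C, rfl⟩ : ∃ C : ConvexCone ℝ Y, (C : Set Y) = P :=
    ⟨⟨P, fun _ hc _ hy => hPcone _ hc _ hy,
      fun _ ha _ hb => hPconv.add_mem_of_smul_mem hPcone ha hb⟩, rfl⟩
  intro x
  obtain ⟨lam, hlam⟩ :=
    EReal.exists_biInf_coe_eq (hF x) ((hbdd x).bddBelow_psi hPclosed hPuniv hq)
  have hx : x ∈ Colev C q F lam := by
    rw [hlev]
    exact hlam.le
  obtain ⟨z, hz, hzle⟩ := exists_psi_le_of_mem_colev hPclosed hPuniv hq hx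
  refine ⟨z, hz, fun w hw => hzle.trans ?_⟩
  exact EReal.coe_le_coe_iff.mp (hlam ▸ iInf₂_le w hw)

/-- If `F` is `P`-bounded-valued and `Colev_{<ˡ}(F, λq) = [Ψ_F ≤ λ]` for every `λ ∈ ℝ`,
then `F` satisfies assumption (A). -/
theorem stmt5 {X Y : Type*} [TopologicalSpace X] [T2Space X]
    [AddCommGroup Y] [Module ℝ Y] [TopologicalSpace Y]
    [IsTopologicalAddGroup Y] [ContinuousSMul ℝ Y] [T2Space Y]
    (P : Set Y) (hPclosed : IsClosed P) (hPconv : Convex ℝ P)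
    (hP0 : (0 : Y) ∈ P) (hPcone : ∀ c : ℝ, 0 < c → ∀ y ∈ P, c • y ∈ P)
    (hPne : P ≠ {0}) (hPuniv : P ≠ Set.univ)
    (q : Y) (hq : q ∈ interior P)
    (F : X → Set Y) (hF : ∀ x, (F x).Nonempty)
    (hbdd : ∀ x, PBounded P (F x))
    (hlev : ∀ lam : ℝ, Colev P q F lam = {x : X | PsiF P q F x ≤ (lam : EReal)}) :
    AssumptionA P q F :=
  stmt5_general P hPclosed hPconv hPcone hPuniv q hq F hF hbdd hlev
end

section
/- Let X = ℝ^n and Y = ℝ^m with the usual norm topologies. If F is P-closed-valued (F(x) + P is closed for every x) and bounded-valued (F(x) is a bounded subset of ℝ^m for every x), then F satisfies assumption (A). -/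
open Pointwise

/-! `ψ^q_P` is finite and Lipschitz because `q` is an interior point of the cone `P` and `-q ∉ P`,
and it is monotone along `P`. On a bounded `F(x)` it attains its minimum over the compact closure
at some `z̄ = z + p` with `z ∈ F(x)`, `p ∈ P` (as `F(x) + P` is closed), and monotonicity gives
`ψ(z) ≤ ψ(z̄)`. -/

open Set Metric

theorem Convex.add_mem_of_smul_mem_s6 {V : Type*} [AddCommGroup V] [Module ℝ V] {P : Set V}
    (hconv : Convex ℝ P) (hsmul : ∀ c : ℝ, 0 < c → ∀ y ∈ P, c • y ∈ P) {x y : V}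
    (hx : x ∈ P) (hy : y ∈ P) : x + y ∈ P := by
  have hmid := hconv hx hy (by norm_num : (0 : ℝ) ≤ 1 / 2) (by norm_num : (0 : ℝ) ≤ 1 / 2)
    (by norm_num)
  convert hsmul 2 two_pos _ hmid using 1
  rw [smul_add, smul_smul, smul_smul]
  norm_num

namespace ConvexCone

variable {E : Type*} [NormedAddCommGroup E] [NormedSpace ℝ E] {K : ConvexCone ℝ E} {q : E}

theorem smul_mem_of_nonneg (h0 : K.Pointed) {c : ℝ} (hc : 0 ≤ c) {x : E} (hx : x ∈ K) :
    c • x ∈ K := by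
  rcases hc.eq_or_lt with rfl | hc
  · rw [zero_smul]
    exact h0
  · exact K.smul_mem hc hx

theorem exists_add_smul_norm_mem (h0 : K.Pointed) (hq : q ∈ interior (K : Set E)) :
    ∃ ε > 0, ∀ y : E, y + (‖y‖ / ε) • q ∈ K := by
  obtain ⟨ε, hε, hball⟩ := nhds_basis_closedBall.mem_iff.1 (mem_interior_iff_mem_nhds.1 hq)
  refine ⟨ε, hε, fun y => ?_⟩
  rcases eq_or_ne y 0 with rfl | hy
  · rwa [norm_zero, zero_div, zero_smul, add_zero]
  have hc : 0 < ‖y‖ / ε := div_pos (norm_pos_iff.2 hy) hε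
  have hmem : q + (‖y‖ / ε)⁻¹ • y ∈ closedBall q ε := by
    rw [mem_closedBall, dist_eq_norm, add_sub_cancel_left, norm_smul, Real.norm_of_nonneg
      (inv_nonneg.2 hc.le), inv_div, div_mul_cancel₀ _ (norm_ne_zero_iff.2 hy)]
  convert K.smul_mem hc (hball hmem) using 1
  rw [smul_add, smul_inv_smul₀ hc.ne', add_comm]

theorem neg_notMem_of_mem_interior_s6 (h0 : K.Pointed) (hK : (K : Set E) ≠ univ)
    (hq : q ∈ interior (K : Set E)) : -q ∉ K := by
  intro hnq
  obtain ⟨ε, hε, hKε⟩ := exists_add_smul_norm_mem h0 hq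
  refine hK (eq_univ_of_forall fun y => ?_)
  have h := K.add_mem (hKε y) (smul_mem_of_nonneg h0 (div_nonneg (norm_nonneg y) hε.le) hnq)
  rwa [smul_neg, add_neg_cancel_right] at h

theorem bddAbove_setOf_sub_smul_mem (hclosed : IsClosed (K : Set E)) (hq : -q ∉ K) (y : E) :
    BddAbove {t : ℝ | y - t • q ∈ K} := by
  obtain ⟨d, hd, hball⟩ := isOpen_iff.1 hclosed.isOpen_compl (-q) hq
  refine ⟨‖y‖ / d, fun t ht => ?_⟩
  by_contra! hlt
  have ht0 : 0 < t := (div_nonneg (norm_nonneg y) hd.le).trans_lt hlt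
  refine hball ?_ (K.smul_mem (inv_pos.2 ht0) ht)
  rw [mem_ball, dist_eq_norm, smul_sub, inv_smul_smul₀ ht0.ne', sub_neg_eq_add, sub_add_cancel,
    norm_smul, Real.norm_of_nonneg (inv_nonneg.2 ht0.le), inv_mul_eq_div]
  exact (div_lt_comm₀ ht0 hd).2 hlt

end ConvexCone

theorem psi_le_psi_add_of_mem {V : Type*} [AddCommGroup V] [Module ℝ V] {K : ConvexCone ℝ V}
    {q y p : V} (hne : ∃ t : ℝ, y - t • q ∈ K)
    (hbdd : BddAbove {t : ℝ | y + p - t • q ∈ K}) (hp : p ∈ K) :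
    psi K q y ≤ psi K q (y + p) :=
  csSup_le_csSup hbdd hne fun t ht => by
    show y + p - t • q ∈ K
    rw [← sub_add_eq_add_sub]
    exact K.add_mem ht hp

theorem lipschitzWith_psi {E : Type*} [NormedAddCommGroup E] [NormedSpace ℝ E]
    {K : ConvexCone ℝ E} {q : E} {ε : ℝ} (hKε : ∀ y : E, y + (‖y‖ / ε) • q ∈ K)
    (hbdd : ∀ y : E, BddAbove {t : ℝ | y - t • q ∈ K}) :
    LipschitzWith (Real.toNNReal ε⁻¹) (psi K q) := by
  refine LipschitzWith.of_le_add_mul' _ fun y y' => ?_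
  refine csSup_le ⟨-(‖y‖ / ε), by simpa using hKε y⟩ fun t ht => ?_
  have hmem : y' - (t - ε⁻¹ * dist y y') • q ∈ K := by
    convert K.add_mem ht (hKε (y' - y)) using 1
    rw [dist_eq_norm, norm_sub_rev, sub_smul, div_eq_inv_mul]
    abel
  have hle : t - ε⁻¹ * dist y y' ≤ psi K q y' := le_csSup (hbdd y') hmem
  linarith

theorem exists_isMinOn_of_isClosed_add {E : Type*} [NormedAddCommGroup E] [ProperSpace E]
    {K S : Set E} {f : E → ℝ} (hf : Continuous f)
    (hmono : ∀ y, ∀ p ∈ K, f y ≤ f (y + p)) (h0 : (0 : E) ∈ K)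
    (hS : S.Nonempty) (hSb : Bornology.IsBounded S) (hSK : IsClosed (S + K)) :
    ∃ z ∈ S, IsMinOn f S z := by
  obtain ⟨z', hz', hmin⟩ := hSb.isCompact_closure.exists_isMinOn hS.closure hf.continuousOn
  have hcl : closure S ⊆ S + K :=
    hSK.closure_subset_iff.2 fun y hy => ⟨y, hy, 0, h0, add_zero y⟩
  obtain ⟨z, hz, p, hp, rfl⟩ := hcl hz'
  exact ⟨z, hz, isMinOn_iff.2 fun w hw =>
    (hmono z p hp).trans (isMinOn_iff.1 hmin w (subset_closure hw))⟩

theorem stmt6_general {n m : ℕ}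
    (P : Set (EuclideanSpace ℝ (Fin m))) (hPclosed : IsClosed P) (hPconv : Convex ℝ P)
    (hP0 : (0 : EuclideanSpace ℝ (Fin m)) ∈ P)
    (hPcone : ∀ c : ℝ, 0 < c → ∀ y ∈ P, c • y ∈ P)
    (hPuniv : P ≠ Set.univ)
    (q : EuclideanSpace ℝ (Fin m)) (hq : q ∈ interior P)
    (F : EuclideanSpace ℝ (Fin n) → Set (EuclideanSpace ℝ (Fin m)))
    (hF : ∀ x, (F x).Nonempty)
    (hPcl : ∀ x, IsClosed (F x + P))
    (hbd : ∀ x, Bornology.IsBounded (F x)) :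
    AssumptionA P q F := by
  let K : ConvexCone ℝ (EuclideanSpace ℝ (Fin m)) :=
    ⟨P, fun c hc y hy => hPcone c hc y hy,
      fun _ hx _ hy => hPconv.add_mem_of_smul_mem_s6 hPcone hx hy⟩
  obtain ⟨ε, -, hKε⟩ := K.exists_add_smul_norm_mem hP0 hq
  have hbdd :=
    K.bddAbove_setOf_sub_smul_mem hPclosed (K.neg_notMem_of_mem_interior_s6 hP0 hPuniv hq)
  have hmono : ∀ y, ∀ p ∈ P, psi P q y ≤ psi P q (y + p) := fun y p hp =>
    psi_le_psi_add_of_mem (K := K) ⟨-(‖y‖ / ε), by simpa using hKε y⟩ (hbdd _) hp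
  intro x
  obtain ⟨z, hz, hmin⟩ := exists_isMinOn_of_isClosed_add
    (lipschitzWith_psi hKε hbdd).continuous hmono hP0 (hF x) (hbd x) (hPcl x)
  exact ⟨z, hz, isMinOn_iff.1 hmin⟩

/-- If `X = ℝⁿ`, `Y = ℝᵐ`, and `F` is `P`-closed-valued (`F(x) + P` closed) and
bounded-valued, then `F` satisfies assumption (A). -/
theorem stmt6 {n m : ℕ}
    (P : Set (EuclideanSpace ℝ (Fin m))) (hPclosed : IsClosed P) (hPconv : Convex ℝ P)
    (hP0 : (0 : EuclideanSpace ℝ (Fin m)) ∈ P)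
    (hPcone : ∀ c : ℝ, 0 < c → ∀ y ∈ P, c • y ∈ P)
    (hPne : P ≠ {0}) (hPuniv : P ≠ Set.univ)
    (q : EuclideanSpace ℝ (Fin m)) (hq : q ∈ interior P)
    (F : EuclideanSpace ℝ (Fin n) → Set (EuclideanSpace ℝ (Fin m)))
    (hF : ∀ x, (F x).Nonempty)
    (hPcl : ∀ x, IsClosed (F x + P))
    (hbd : ∀ x, Bornology.IsBounded (F x)) :
    AssumptionA P q F :=
  stmt6_general P hPclosed hPconv hP0 hPcone hPuniv q hq F hF hPcl hbd
end

section
/- F is q-srgi if and only if the set-valued map λ ↦ Colev_{<^l}(F, λq) is transfer closed on (M_F^q, +∞), i.e., ⋂_{λ > M_F^q} cl(Colev_{<^l}(F, λq)) = ⋂_{λ > M_F^q} Colev_{<^l}(F, λq), where the intersections range over real λ with λ > M_F^q. -/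
open Pointwise

/-- `M_F^q = sup {t ∈ ℝ : F(X) ⊆ t • q + P} ∈ ℝ ∪ {±∞}` (with `sup ∅ = -∞`). -/
noncomputable def Mq {X Y : Type*} [AddCommGroup Y] [Module ℝ Y]
    (P : Set Y) (q : Y) (F : X → Set Y) : EReal :=
  sSup ((fun t : ℝ => (t : EReal)) '' {t : ℝ | ∀ x : X, ∀ z ∈ F x, z - t • q ∈ P})

/-- `F` is `q`-srgi: if `λ > M_F^q` and `x₀ ∉ Colev_{<ˡ}(F, λq)`, then there exist a
neighborhood `U` of `x₀` and a real `r > M_F^q` with `U ∩ Colev_{<ˡ}(F, rq) = ∅`. -/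
def Srgi {X Y : Type*} [TopologicalSpace X] [AddCommGroup Y] [Module ℝ Y] [TopologicalSpace Y]
    (P : Set Y) (q : Y) (F : X → Set Y) : Prop :=
  ∀ lam : ℝ, Mq P q F < (lam : EReal) → ∀ x₀ : X, x₀ ∉ Colev P q F lam →
    ∃ U ∈ nhds x₀, ∃ r : ℝ, Mq P q F < (r : EReal) ∧ U ∩ Colev P q F r = ∅

open Topology

theorem notMem_closure_iff_exists_mem_nhds_inter_eq_empty {X : Type*} [TopologicalSpace X]
    {s : Set X} {x : X} : x ∉ closure s ↔ ∃ U ∈ 𝓝 x, U ∩ s = ∅ := by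
  simp only [mem_closure_iff_nhds, not_forall, Set.not_nonempty_iff_eq_empty, exists_prop]

/-- The two usual definitions of transfer closedness of `i ↦ A i` on `S` agree. -/
theorem biInter_closure_eq_biInter_iff {X ι : Type*} [TopologicalSpace X]
    (S : Set ι) (A : ι → Set X) :
    ⋂ i ∈ S, closure (A i) = ⋂ i ∈ S, A i ↔
      ∀ i ∈ S, ∀ x ∉ A i, ∃ j ∈ S, x ∉ closure (A j) := by
  have hsub : ⋂ i ∈ S, A i ⊆ ⋂ i ∈ S, closure (A i) :=
    Set.iInter₂_mono fun _ _ => subset_closure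
  rw [Set.Subset.antisymm_iff, and_iff_left hsub, ← Set.compl_subset_compl]
  simp only [Set.compl_iInter₂, Set.iUnion₂_subset_iff]
  simp only [Set.subset_def, Set.mem_iUnion₂, Set.mem_compl_iff, exists_prop]

theorem stmt9_general {X Y : Type*} [TopologicalSpace X]
    [AddCommGroup Y] [Module ℝ Y] [TopologicalSpace Y]
    (P : Set Y) (q : Y) (F : X → Set Y) :
    Srgi P q F ↔
      ⋂ lam ∈ {l : ℝ | Mq P q F < (l : EReal)}, closure (Colev P q F lam) =
        ⋂ lam ∈ {l : ℝ | Mq P q F < (l : EReal)}, Colev P q F lam := by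
  rw [biInter_closure_eq_biInter_iff]
  simp only [Srgi, notMem_closure_iff_exists_mem_nhds_inter_eq_empty]
  exact forall₂_congr fun _ _ => forall₂_congr fun _ _ =>
    ⟨fun ⟨U, hU, r, hr, hdisj⟩ => ⟨r, hr, U, hU, hdisj⟩,
      fun ⟨r, hr, U, hU, hdisj⟩ => ⟨U, hU, r, hr, hdisj⟩⟩

/-- `F` is `q`-srgi iff `λ ↦ Colev_{<ˡ}(F, λq)` is transfer closed on `(M_F^q, +∞)`. -/
theorem stmt9 {X Y : Type*} [TopologicalSpace X] [T2Space X]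
    [AddCommGroup Y] [Module ℝ Y] [TopologicalSpace Y]
    [IsTopologicalAddGroup Y] [ContinuousSMul ℝ Y] [T2Space Y]
    (P : Set Y) (hPclosed : IsClosed P) (hPconv : Convex ℝ P)
    (hP0 : (0 : Y) ∈ P) (hPcone : ∀ c : ℝ, 0 < c → ∀ y ∈ P, c • y ∈ P)
    (hPne : P ≠ {0}) (hPuniv : P ≠ Set.univ)
    (q : Y) (hq : q ∈ interior P)
    (F : X → Set Y) (hF : ∀ x, (F x).Nonempty) :
    Srgi P q F ↔
      ⋂ lam ∈ {l : ℝ | Mq P q F < (l : EReal)}, closure (Colev P q F lam) =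
        ⋂ lam ∈ {l : ℝ | Mq P q F < (l : EReal)}, Colev P q F lam :=
  stmt9_general P q F
end

section
/- Let X = ℝ^n and Y = ℝ^m with the usual norm topologies, and let F : ℝ^n ⇉ ℝ^m be l-colevel closed, P-closed-valued (F(x) + P closed for all x) and bounded-valued (F(x) bounded for all x). Assume that for some x₀, Colev_{<^l}(F, F(x₀)) is bounded and F(Colev_{<^l}(F, F(x₀))) = ⋃{F(x) : x ∈ Colev_{<^l}(F, F(x₀))} is a P-bounded set. Then l-SWEff(F) is nonempty and compact. -/
open Pointwise

/-- The colevel set of `F` at height `B ⊆ Y`: `{x : F(x) ⊄ B + int P}`. -/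
def ColevB {X Y : Type*} [AddCommGroup Y] [Module ℝ Y] [TopologicalSpace Y]
    (P : Set Y) (F : X → Set Y) (B : Set Y) : Set X :=
  {x | ¬ F x ⊆ B + interior P}

/-- `x̄` is a strict weakly `l`-efficient solution of (SOP). -/
def SWEff {X Y : Type*} [AddCommGroup Y] [Module ℝ Y] [TopologicalSpace Y]
    (P : Set Y) (F : X → Set Y) (xbar : X) : Prop :=
  ¬ ∃ x : X, x ≠ xbar ∧ F xbar ⊆ F x + interior P

open Set Filter Topology

/-! Write `x ≺ y` for `F x ⊆ F y + int P`. It is transitive since `int P + int P ⊆ int P`, and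
irreflexive by Farkas' lemma: a functional that is nonnegative on `P` and positive on `int P`
attains its minimum over the compact set `closure (F x) ⊆ F x + P` at some `a + p` with `a ∈ F x`,
and then `a ∉ F x + int P`. The strict weakly efficient points are the `≺`-maximal points, i.e. the
intersection of the closed colevel sets `{x | ¬ x ≺ y}`. They have the finite intersection property
inside the compact colevel set at `x₀`: for finite `u`, a `≺`-maximal element of `insert x₀ u` lies
in all `{x | ¬ x ≺ y}` with `y ∈ insert x₀ u`. -/

theorem Set.Finite.exists_forall_not_rel {α : Type*} {r : α → α → Prop} [IsStrictOrder α r]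
    {s : Set α} (hs : s.Finite) (hne : s.Nonempty) : ∃ x ∈ s, ∀ y ∈ s, ¬ r x y := by
  obtain ⟨⟨x, hx⟩, -, hmax⟩ :=
    (hs.wellFoundedOn (r := Function.swap r)).has_min univ ⟨⟨_, hne.some_mem⟩, trivial⟩
  exact ⟨x, hx, fun y hy => hmax ⟨y, hy⟩ trivial⟩

section Maximal

variable {X : Type*} [TopologicalSpace X] {r : X → X → Prop}

theorem nonempty_setOf_forall_not_rel [IsStrictOrder X r] (hr : ∀ y, IsClosed {x | ¬ r x y})
    {x₀ : X} (hx₀ : IsCompact {x | ¬ r x x₀}) : {x | ∀ y, ¬ r x y}.Nonempty := by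
  obtain ⟨x, -, hx⟩ := hx₀.inter_iInter_nonempty (fun y => {x | ¬ r x y}) hr fun u => by
    obtain ⟨m, -, hmax⟩ :=
      (u.finite_toSet.insert x₀).exists_forall_not_rel (r := r) (insert_nonempty x₀ (u : Set X))
    exact ⟨m, hmax x₀ (mem_insert _ _), mem_iInter₂.2 fun y hy => hmax y (mem_insert_of_mem _ hy)⟩
  exact ⟨x, mem_iInter.1 hx⟩

theorem isCompact_setOf_forall_not_rel (hr : ∀ y, IsClosed {x | ¬ r x y})
    {x₀ : X} (hx₀ : IsCompact {x | ¬ r x x₀}) : IsCompact {x | ∀ y, ¬ r x y} := by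
  refine hx₀.of_isClosed_subset ?_ fun x hx => hx x₀
  rw [ofPred_forall]
  exact isClosed_iInter hr

end Maximal

namespace ProperCone

section OfConvex

variable {E : Type*} [AddCommGroup E] [Module ℝ E] [TopologicalSpace E]

def ofConvex (P : Set E) (hclosed : IsClosed P) (hconv : Convex ℝ P) (h0 : (0 : E) ∈ P)
    (hsmul : ∀ c : ℝ, 0 < c → ∀ y ∈ P, c • y ∈ P) : ProperCone ℝ E :=
  ⟨ConvexCone.toPointedCone
    { carrier := P
      smul_mem' := fun c hc y hy => hsmul c hc y hy
      add_mem' := fun x hx y hy => by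
        have hmid := hconv hx hy (by norm_num : (0 : ℝ) ≤ 1 / 2) (by norm_num : (0 : ℝ) ≤ 1 / 2)
          (by norm_num)
        simpa [smul_add, smul_smul] using hsmul 2 two_pos _ hmid } h0, hclosed⟩

end OfConvex

variable {E : Type*} [TopologicalSpace E] [AddCommGroup E] [IsTopologicalAddGroup E]
  [Module ℝ E] (C : ProperCone ℝ E)

theorem exists_strongDual_nonneg_and_pos_on_interior [ContinuousSMul ℝ E] [LocallyConvexSpace ℝ E]
    (hC : (C : Set E) ≠ univ) :
    ∃ f : StrongDual ℝ E, (∀ x ∈ C, 0 ≤ f x) ∧ ∀ x ∈ interior (C : Set E), 0 < f x := by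
  obtain ⟨z, hz⟩ := (ne_univ_iff_exists_notMem _).1 hC
  obtain ⟨f, hfC, hfz⟩ := C.hyperplane_separation_point hz
  refine ⟨f, hfC, fun x hx => ?_⟩
  have hlim : Tendsto (fun t : ℝ => x + t • z) (𝓝[>] 0) (𝓝 x) := by
    have : Continuous (fun t : ℝ => x + t • z) := by fun_prop
    simpa using (this.tendsto 0).mono_left nhdsWithin_le_nhds
  obtain ⟨t, htC, ht⟩ :=
    ((hlim.eventually (isOpen_interior.mem_nhds hx)).and self_mem_nhdsWithin).exists
  have hft := hfC _ (interior_subset htC)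
  rw [map_add, map_smul, smul_eq_mul] at hft
  linarith [mul_neg_of_pos_of_neg (show 0 < t from ht) hfz]

theorem interior_add_interior_subset :
    interior (C : Set E) + interior (C : Set E) ⊆ interior (C : Set E) :=
  isOpen_interior.add_right.subset_interior_iff.2 <|
    (add_subset_add interior_subset interior_subset).trans <|
      add_subset_iff.2 fun _ ha _ hb => C.add_mem ha hb

theorem subset_add_interior_trans {A B D : Set E} (hAB : A ⊆ B + interior (C : Set E))
    (hBD : B ⊆ D + interior (C : Set E)) : A ⊆ D + interior (C : Set E) :=
  calc A ⊆ B + interior (C : Set E) := hAB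
    _ ⊆ D + interior (C : Set E) + interior (C : Set E) := add_subset_add_right hBD
    _ = D + (interior (C : Set E) + interior (C : Set E)) := add_assoc _ _ _
    _ ⊆ D + interior (C : Set E) := add_subset_add_left C.interior_add_interior_subset

theorem not_subset_add_interior [ContinuousSMul ℝ E] [LocallyConvexSpace ℝ E]
    (hC : (C : Set E) ≠ univ) {A : Set E} (hA : A.Nonempty)
    (hAc : IsCompact (closure A)) (hAC : IsClosed (A + (C : Set E))) :
    ¬ A ⊆ A + interior (C : Set E) := by
  intro hsub
  obtain ⟨f, hfC, hfint⟩ := C.exists_strongDual_nonneg_and_pos_on_interior hC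
  obtain ⟨b, hb, hmin⟩ := hAc.exists_isMinOn hA.closure f.continuous.continuousOn
  obtain ⟨a, ha, p, hp, rfl⟩ := hAC.closure_subset_iff.2 (subset_add_left A C.zero_mem) hb
  obtain ⟨a', ha', p', hp', rfl⟩ := hsub ha
  have hle : f (a' + p' + p) ≤ f a' := hmin (subset_closure ha')
  rw [map_add, map_add] at hle
  linarith [hfC p hp, hfint p' hp']

end ProperCone

theorem stmt16_general {n m : ℕ}
    (P : Set (EuclideanSpace ℝ (Fin m))) (hPclosed : IsClosed P) (hPconv : Convex ℝ P)
    (hP0 : (0 : EuclideanSpace ℝ (Fin m)) ∈ P)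
    (hPcone : ∀ c : ℝ, 0 < c → ∀ y ∈ P, c • y ∈ P)
    (hPuniv : P ≠ Set.univ)
    (F : EuclideanSpace ℝ (Fin n) → Set (EuclideanSpace ℝ (Fin m)))
    (hF : ∀ x, (F x).Nonempty)
    (hclev : ∀ B : Set (EuclideanSpace ℝ (Fin m)), IsClosed (ColevB P F B))
    (hPcl : ∀ x, IsClosed (F x + P))
    (hbd : ∀ x, Bornology.IsBounded (F x))
    (x₀ : EuclideanSpace ℝ (Fin n))
    (hbd₀ : Bornology.IsBounded (ColevB P F (F x₀))) :
    {x | SWEff P F x}.Nonempty ∧ IsCompact {x | SWEff P F x} := by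
  let C := ProperCone.ofConvex P hPclosed hPconv hP0 hPcone
  let r : EuclideanSpace ℝ (Fin n) → EuclideanSpace ℝ (Fin n) → Prop :=
    fun x y => F x ⊆ F y + interior P
  have hirr : ∀ x, ¬ r x x := fun x =>
    C.not_subset_add_interior hPuniv (hF x) (hbd x).isCompact_closure (hPcl x)
  have : IsStrictOrder _ r :=
    { irrefl := hirr
      trans := fun _ _ _ => C.subset_add_interior_trans }
  have hSWEff : {x | SWEff P F x} = {x | ∀ y, ¬ r x y} := by
    ext x
    simp only [SWEff, mem_ofPred_eq, not_exists, not_and]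
    exact ⟨fun h y hxy => (eq_or_ne y x).elim (fun hyx => hirr x (hyx ▸ hxy)) (h y · hxy),
      fun h y _ => h y⟩
  have hD : IsCompact {x | ¬ r x x₀} := Metric.isCompact_of_isClosed_isBounded (hclev _) hbd₀
  rw [hSWEff]
  exact ⟨nonempty_setOf_forall_not_rel (fun y => hclev (F y)) hD,
    isCompact_setOf_forall_not_rel (fun y => hclev (F y)) hD⟩

/-- Let `X = ℝⁿ`, `Y = ℝᵐ`, `F` `l`-colevel closed, `P`-closed-valued and bounded-valued.
If for some `x₀` the set `Colev_{<ˡ}(F, F(x₀))` is bounded and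
`F(Colev_{<ˡ}(F, F(x₀)))` is `P`-bounded, then `l-SWEff(F)` is nonempty and compact. -/
theorem stmt16 {n m : ℕ}
    (P : Set (EuclideanSpace ℝ (Fin m))) (hPclosed : IsClosed P) (hPconv : Convex ℝ P)
    (hP0 : (0 : EuclideanSpace ℝ (Fin m)) ∈ P)
    (hPcone : ∀ c : ℝ, 0 < c → ∀ y ∈ P, c • y ∈ P)
    (hPne : P ≠ {0}) (hPuniv : P ≠ Set.univ)
    (q : EuclideanSpace ℝ (Fin m)) (hq : q ∈ interior P)
    (F : EuclideanSpace ℝ (Fin n) → Set (EuclideanSpace ℝ (Fin m)))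
    (hF : ∀ x, (F x).Nonempty)
    (hclev : ∀ B : Set (EuclideanSpace ℝ (Fin m)), IsClosed (ColevB P F B))
    (hPcl : ∀ x, IsClosed (F x + P))
    (hbd : ∀ x, Bornology.IsBounded (F x))
    (x₀ : EuclideanSpace ℝ (Fin n))
    (hbd₀ : Bornology.IsBounded (ColevB P F (F x₀)))
    (hPbd₀ : PBounded P (⋃ x ∈ ColevB P F (F x₀), F x)) :
    {x | SWEff P F x}.Nonempty ∧ IsCompact {x | SWEff P F x} :=
  stmt16_general P hPclosed hPconv hP0 hPcone hPuniv F hF hclev hPcl hbd x₀ hbd₀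
end
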